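/- arXiv:1604.02830 — 2 statements merged into one kernel-verified Lean document; each statement's English description precedes it below -/
import Mathlib

section
/- Let n ≥ 1, k ≥ 1, and let g_j : F_{2^n} → F_2 for 0 ≤ j ≤ k−1 be Boolean functions with g_j(0) = 0 for all j and Σ_{t ∈ F_{2^n}} ζ^{Σ_{j=0}^{k−1} 2^j g_j(t)} = 0, where ζ = e^{2πi/2^k}. Then the function f : F_{2^n} × F_{2^n} → Z_{2^k} given by f(y′, y) = Σ_{j=0}^{k−1} 2^j g_j(y′/y) (with the convention y′/y = 0 if y = 0) is gbent with respect to the inner product ⟨(a,b),(y′,y)⟩ = Tr(a y′ + b y), and its dual is f*(y′, y) = Σ_{j=0}^{k−1} 2^j g_j(y/y′). -/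
/-!
For a primitive additive character `ψ` of a finite field `F` and `h : F → R` with `h 0 = 1`
and `∑ h = 0`, one has `∑_{y', y} h (y' / y) ψ (a y' + b y) = |F| h (-b / a)`. The column
`y = 0` contributes `|F|` if `a = 0` and nothing otherwise. For `y ≠ 0` substitute `y' = s y`;
the columns then become `∑_s h s ψ (y (a s + b))`, which at `y = 0` would be `∑ h = 0`, so
summing over all `y` by orthogonality leaves `|F| ∑_{a s + b = 0} h s`. Since `-b / 0 = 0` and
`h 0 = 1`, both cases give `|F| h (-b / a)`. The theorem is the case `ψ x = (-1) ^ Tr x`,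
`h t = ζ ^ (∑ 2 ^ j g_j t)`, where `-b = b` in characteristic two.
-/
open scoped BigOperators

/-- `zeta q = e^{2πi/q}`, a primitive `q`-th root of unity. -/
noncomputable def zeta (q : ℕ) : ℂ := Complex.exp (2 * Real.pi * Complex.I / (q : ℂ))

noncomputable instance (n : ℕ) : Fintype (GaloisField 2 n) := Fintype.ofFinite _

/-- The generalized Walsh-Hadamard transform on `F_{2^n} × F_{2^n}` with respect to the
inner product `⟨(a,b),(y′,y)⟩ = Tr(a y′ + b y)`. -/
noncomputable def gwht2 (n q : ℕ) (f : GaloisField 2 n × GaloisField 2 n → ZMod q)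
    (u : GaloisField 2 n × GaloisField 2 n) : ℂ :=
  ∑ v : GaloisField 2 n × GaloisField 2 n, zeta q ^ (f v).val *
    (-1 : ℂ) ^ (Algebra.trace (ZMod 2) (GaloisField 2 n) (u.1 * v.1 + u.2 * v.2)).val

namespace AddChar

variable {F R : Type*} [Field F] [Fintype F] [CommRing R]

lemma sum_div_mul_eq_sum_mulShift (ψ : AddChar F R) (h : F → R) (a b : F) {y : F}
    (hy : y ≠ 0) :
    ∑ x, h (x / y) * ψ (a * x + b * y) = ∑ s, h s * ψ (y * (a * s + b)) := by
  rw [← Equiv.sum_comp (Equiv.mulRight₀ y hy)]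
  refine Fintype.sum_congr _ _ fun s => ?_
  rw [Equiv.mulRight₀_apply, mul_div_cancel_right₀ s hy]
  congr 2
  ring

lemma sum_sum_mul_mulShift [DecidableEq F] [IsDomain R] {ψ : AddChar F R} (hψ : ψ.IsPrimitive)
    (h : F → R) (a b : F) :
    ∑ y, ∑ s, h s * ψ (y * (a * s + b)) =
      Fintype.card F * ∑ s, if a * s + b = 0 then h s else 0 := by
  rw [Finset.sum_comm, Finset.mul_sum]
  refine Fintype.sum_congr _ _ fun s => ?_
  rw [← Finset.mul_sum, sum_mulShift _ hψ]
  split_ifs <;> ring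

lemma sum_ite_mul_add_eq_zero [DecidableEq F] {a : F} (ha : a ≠ 0) (h : F → R) (b : F) :
    (∑ s, if a * s + b = 0 then h s else 0) = h (-b / a) := by
  have hiff : ∀ s, a * s + b = 0 ↔ -b / a = s := fun s => by
    rw [add_eq_zero_iff_eq_neg, div_eq_iff ha, mul_comm s, eq_comm]
  simp only [hiff, Finset.sum_ite_eq, Finset.mem_univ, if_true]

theorem sum_div_mul_addChar [IsDomain R] {ψ : AddChar F R} (hψ : ψ.IsPrimitive) {h : F → R}
    (h0 : h 0 = 1) (hsum : ∑ s, h s = 0) (a b : F) :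
    ∑ v : F × F, h (v.1 / v.2) * ψ (a * v.1 + b * v.2) = Fintype.card F * h (-b / a) := by
  classical
  set G : F → R := fun y => ∑ s, h s * ψ (y * (a * s + b))
  have hG0 : G 0 = 0 := by simp only [G, zero_mul, map_zero_eq_one, mul_one, hsum]
  have row0 :
      ∑ x, h (x / 0) * ψ (a * x + b * 0) = if a = 0 then (Fintype.card F : R) else 0 := by
    simp only [div_zero, h0, one_mul, mul_zero, add_zero, mul_comm a, sum_mulShift _ hψ,
      Nat.cast_ite, Nat.cast_zero]
  calc ∑ v : F × F, h (v.1 / v.2) * ψ (a * v.1 + b * v.2)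
      = ∑ y, ∑ x, h (x / y) * ψ (a * x + b * y) := by
        rw [Fintype.sum_prod_type, Finset.sum_comm]
    _ = (if a = 0 then (Fintype.card F : R) else 0) + ∑ y, G y := by
        rw [← Finset.add_sum_erase _ _ (Finset.mem_univ 0), row0,
          ← Finset.sum_erase _ hG0]
        congr 1
        exact Finset.sum_congr rfl fun y hy =>
          sum_div_mul_eq_sum_mulShift ψ h a b (Finset.ne_of_mem_erase hy)
    _ = (if a = 0 then (Fintype.card F : R) else 0) +
          Fintype.card F * ∑ s, if a * s + b = 0 then h s else 0 := by
        rw [sum_sum_mul_mulShift hψ]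
    _ = Fintype.card F * h (-b / a) := by
        by_cases ha : a = 0
        · simp only [ha, if_true, zero_mul, zero_add, div_zero, h0, Finset.sum_ite_irrel, hsum,
            Finset.sum_const_zero, ite_self, mul_zero, add_zero, mul_one]
        · rw [if_neg ha, zero_add, sum_ite_mul_add_eq_zero ha]

end AddChar

lemma zeta_isPrimitiveRoot (q : ℕ) [NeZero q] : IsPrimitiveRoot (zeta q) q :=
  Complex.isPrimitiveRoot_exp q (NeZero.ne q)

noncomputable def zetaChar (q : ℕ) [NeZero q] : AddChar (ZMod q) ℂ :=
  AddChar.zmodChar q ((zeta_isPrimitiveRoot q).pow_eq_one)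

lemma zetaChar_apply (q : ℕ) [NeZero q] (x : ZMod q) : zetaChar q x = zeta q ^ x.val := rfl

noncomputable def traceChar (n : ℕ) : AddChar (GaloisField 2 n) ℂ :=
  (AddChar.zmodChar 2 (by norm_num : (-1 : ℂ) ^ 2 = 1)).compAddMonoidHom
    (Algebra.trace (ZMod 2) (GaloisField 2 n)).toAddMonoidHom

lemma traceChar_isPrimitive (n : ℕ) : (traceChar n).IsPrimitive := by
  refine AddChar.IsPrimitive.of_ne_one (AddChar.ne_one_iff.2 ?_)
  obtain ⟨x, hx⟩ := Algebra.trace_surjective (ZMod 2) (GaloisField 2 n) 1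
  refine ⟨x, ?_⟩
  simp only [traceChar, AddChar.compAddMonoidHom_apply, LinearMap.toAddMonoidHom_coe, hx,
    AddChar.zmodChar_apply, ZMod.val_one]
  norm_num

lemma gwht2_eq_sum_zetaChar_mul_traceChar (n q : ℕ) [NeZero q]
    (f : GaloisField 2 n × GaloisField 2 n → ZMod q) (u : GaloisField 2 n × GaloisField 2 n) :
    gwht2 n q f u = ∑ v, zetaChar q (f v) * traceChar n (u.1 * v.1 + u.2 * v.2) := rfl

theorem statement_6_general (n k : ℕ) (hn : 1 ≤ n)
    (g : ℕ → GaloisField 2 n → ZMod 2)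
    (hg0 : ∀ j < k, g j 0 = 0)
    (hsum : ∑ t : GaloisField 2 n,
      zeta (2 ^ k) ^ (∑ j ∈ Finset.range k, 2 ^ j * (g j t).val) = 0)
    (f : GaloisField 2 n × GaloisField 2 n → ZMod (2 ^ k))
    (hf : ∀ v, f v = ∑ j ∈ Finset.range k,
      (2 ^ j : ZMod (2 ^ k)) * ((g j (v.1 / v.2)).val : ZMod (2 ^ k))) :
    (∀ u, ‖gwht2 n (2 ^ k) f u‖ = 2 ^ n) ∧
    (∀ u, gwht2 n (2 ^ k) f u = (2 ^ n : ℂ) *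
      zeta (2 ^ k) ^ ((∑ j ∈ Finset.range k,
        (2 ^ j : ZMod (2 ^ k)) * ((g j (u.2 / u.1)).val : ZMod (2 ^ k))) : ZMod (2 ^ k)).val) := by
  set G : GaloisField 2 n → ZMod (2 ^ k) := fun t =>
    ∑ j ∈ Finset.range k, (2 ^ j : ZMod (2 ^ k)) * ((g j t).val : ZMod (2 ^ k))
  have hG0 : G 0 = 0 := Finset.sum_eq_zero fun j hj => by simp [hg0 j (Finset.mem_range.1 hj)]
  have hGsum : ∑ t, zetaChar (2 ^ k) (G t) = 0 := by
    rw [← hsum]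
    refine Fintype.sum_congr _ _ fun t => ?_
    rw [zetaChar, ← AddChar.zmodChar_apply' ((zeta_isPrimitiveRoot _).pow_eq_one)]
    push_cast
    rfl
  have hcard : Fintype.card (GaloisField 2 n) = 2 ^ n := by
    rw [← Nat.card_eq_fintype_card, GaloisField.card 2 n (by omega)]
  have hwht : ∀ u, gwht2 n (2 ^ k) f u = (2 ^ n : ℂ) * zeta (2 ^ k) ^ (G (u.2 / u.1)).val := by
    intro u
    simp only [gwht2_eq_sum_zetaChar_mul_traceChar, hf]
    rw [AddChar.sum_div_mul_addChar (traceChar_isPrimitive n) (h := fun t => zetaChar _ (G t))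
      (by rw [hG0, AddChar.map_zero_eq_one]) hGsum, hcard, CharTwo.neg_eq, zetaChar_apply,
      Nat.cast_pow, Nat.cast_ofNat]
  refine ⟨fun u => ?_, hwht⟩
  simp [hwht, (zeta_isPrimitiveRoot _).norm'_eq_one (NeZero.ne _)]

theorem statement_6 (n k : ℕ) (hn : 1 ≤ n) (hk : 1 ≤ k)
    (g : ℕ → GaloisField 2 n → ZMod 2)
    (hg0 : ∀ j < k, g j 0 = 0)
    (hsum : ∑ t : GaloisField 2 n,
      zeta (2 ^ k) ^ (∑ j ∈ Finset.range k, 2 ^ j * (g j t).val) = 0)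
    (f : GaloisField 2 n × GaloisField 2 n → ZMod (2 ^ k))
    (hf : ∀ v, f v = ∑ j ∈ Finset.range k,
      (2 ^ j : ZMod (2 ^ k)) * ((g j (v.1 / v.2)).val : ZMod (2 ^ k))) :
    (∀ u, ‖gwht2 n (2 ^ k) f u‖ = 2 ^ n) ∧
    (∀ u, gwht2 n (2 ^ k) f u = (2 ^ n : ℂ) *
      zeta (2 ^ k) ^ ((∑ j ∈ Finset.range k,
        (2 ^ j : ZMod (2 ^ k)) * ((g j (u.2 / u.1)).val : ZMod (2 ^ k))) : ZMod (2 ^ k)).val) :=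
  statement_6_general n k hn g hg0 hsum f hf
end

section
/- Let k ≥ 1, let f_0, f_1, …, f_{k−1} : F_{2^n} → F_2 be Boolean functions, let f : F_{2^n} → Z_{2^k} be f(x) = Σ_{j=0}^{k−1} 2^j f_j(x), and for c = (c_0, …, c_{k−2}) ∈ F_2^{k−1} let f_c(x) = c_0 f_0(x) ⊕ ⋯ ⊕ c_{k−2} f_{k−2}(x) ⊕ f_{k−1}(x) and ι(c) = Σ_{j=0}^{k−2} c_j 2^j. Then for every integer i with gcd(i, 2^n − 1) = 1 and every a ∈ F_{2^n}, H_{f,i}(a) = 2^{−(k−1)} Σ_{(c,d) ∈ F_2^{k−1} × F_2^{k−1}} (−1)^{c·d} ζ^{ι(d)} W_{f_c, i}(a), where ζ = e^{2πi/2^k}, c·d = Σ_{j=0}^{k−2} c_j d_j, and W_{g,i}(a) = Σ_{x ∈ F_{2^n}} (−1)^{g(x) ⊕ Tr(a x^i)} is the extended Walsh–Hadamard transform of the Boolean function g. -/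
open scoped BigOperators

/-- The extended generalized Walsh-Hadamard transform `H_{f,i}(u)` of `f : F_{2^n} → Z_q`. -/
noncomputable def egwht (n q : ℕ) (f : GaloisField 2 n → ZMod q) (i : ℕ) (u : GaloisField 2 n) : ℂ :=
  ∑ x : GaloisField 2 n, zeta q ^ (f x).val *
    (-1 : ℂ) ^ (Algebra.trace (ZMod 2) (GaloisField 2 n) (u * x ^ i)).val

/-- `f : F_{2^n} → Z_q` is g-hyperbent if `|H_{f,i}(u)| = 2^{n/2}` for all `i` coprime to
`2^n - 1` and all `u`. -/
def IsGHyperbent (n q : ℕ) (f : GaloisField 2 n → ZMod q) : Prop :=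
  ∀ i : ℕ, Nat.Coprime i (2 ^ n - 1) → ∀ u, ‖egwht n q f i u‖ = Real.sqrt 2 ^ n

/-- The extended Walsh-Hadamard transform `W_{g,i}(u)` of a Boolean function on `F_{2^n}`. -/
noncomputable def bwhtExt (n : ℕ) (g : GaloisField 2 n → ZMod 2) (i : ℕ) (u : GaloisField 2 n) : ℂ :=
  ∑ x : GaloisField 2 n, (-1 : ℂ) ^ (g x + Algebra.trace (ZMod 2) (GaloisField 2 n) (u * x ^ i)).val

/-- A Boolean function on `F_{2^n}` is hyperbent if `|W_{g,i}(u)| = 2^{n/2}` for all `i`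
coprime to `2^n - 1` and all `u`. -/
def IsHyperbent (n : ℕ) (g : GaloisField 2 n → ZMod 2) : Prop :=
  ∀ i : ℕ, Nat.Coprime i (2 ^ n - 1) → ∀ u, ‖bwhtExt n g i u‖ = Real.sqrt 2 ^ n

/-!
Since `ζ ^ 2 ^ (k - 1) = -1`, the binary expansion of `f` gives
`ζ ^ f(x) = ζ ^ ι(b(x)) · (-1) ^ f_{k-1}(x)` with `b(x) = (f_0(x), …, f_{k-2}(x))`.
Orthogonality of the characters `c ↦ (-1) ^ (c · e)` of `F_2^{k-1}` rewrites `ζ ^ ι(b)` as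
`2^{-(k-1)} Σ_{c,d} (-1) ^ (c · d) ζ ^ ι(d) (-1) ^ (c · b)`, and `(-1) ^ (c · b(x) + f_{k-1}(x))` is
`(-1) ^ f_c(x)`. Multiplying by `(-1) ^ Tr(a x^i)` and summing over `x` gives the identity.
-/

section SignOfZModTwo

variable {R : Type*} [CommRing R]

lemma neg_one_pow_val_add (a b : ZMod 2) :
    (-1 : R) ^ (a + b).val = (-1) ^ a.val * (-1) ^ b.val := by
  rw [ZMod.val_add, ← neg_one_pow_eq_pow_mod_two, pow_add]

lemma neg_one_pow_val_mul (a b : ZMod 2) :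
    (-1 : R) ^ (a * b).val = (-1) ^ (a.val * b.val) := by
  rw [ZMod.val_mul, ← neg_one_pow_eq_pow_mod_two]

lemma neg_one_pow_val_sum {ι : Type*} (s : Finset ι) (g : ι → ZMod 2) :
    (-1 : R) ^ (∑ j ∈ s, g j).val = ∏ j ∈ s, (-1) ^ (g j).val := by
  induction s using Finset.cons_induction with
  | empty => simp
  | cons a s _ ih => rw [Finset.sum_cons, Finset.prod_cons, neg_one_pow_val_add, ih]

lemma neg_one_pow_sum_val_mul_val {ι : Type*} [Fintype ι] (c d : ι → ZMod 2) :
    (-1 : R) ^ (∑ j, (c j).val * (d j).val) = (-1) ^ (∑ j, c j * d j).val := by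
  simp only [neg_one_pow_val_sum, neg_one_pow_val_mul, Finset.prod_pow_eq_pow_sum]

variable {ι : Type*} [Fintype ι] [DecidableEq ι]

lemma sum_neg_one_pow_val_dotProduct (v : ι → ZMod 2) :
    ∑ c : ι → ZMod 2, (-1 : R) ^ (∑ j, c j * v j).val =
      if v = 0 then 2 ^ Fintype.card ι else 0 := by
  simp only [neg_one_pow_val_sum]
  rw [← Fintype.prod_sum fun j (a : ZMod 2) => (-1 : R) ^ (a * v j).val]
  split_ifs with hv
  · simp [hv]
  · obtain ⟨j, hj⟩ := Function.ne_iff.mp hv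
    have hvj : v j = 1 := Fin.eq_one_of_ne_zero (v j) hj
    refine Finset.prod_eq_zero (Finset.mem_univ j) ?_
    rw [show (Finset.univ : Finset (ZMod 2)) = {0, 1} from rfl, Finset.sum_pair zero_ne_one]
    simp [hvj, ZMod.val_one_eq_one_mod]

-- Orthogonality of the characters `c ↦ (-1) ^ (c · e)`: only `d = b` survives the sum over `c`.
lemma sum_sum_neg_one_pow_dotProduct (φ : (ι → ZMod 2) → R) (b : ι → ZMod 2) :
    ∑ c : ι → ZMod 2, ∑ d : ι → ZMod 2,
        (-1 : R) ^ (∑ j, (c j).val * (d j).val) * φ d * (-1) ^ (∑ j, c j * b j).val =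
      2 ^ Fintype.card ι * φ b := by
  have hinner : ∀ d : ι → ZMod 2, ∑ c : ι → ZMod 2,
      (-1 : R) ^ (∑ j, (c j).val * (d j).val) * φ d * (-1) ^ (∑ j, c j * b j).val =
        if d = b then 2 ^ Fintype.card ι * φ d else 0 := by
    intro d
    simp_rw [neg_one_pow_sum_val_mul_val, mul_right_comm _ (φ d), ← neg_one_pow_val_add,
      ← Finset.sum_add_distrib, ← mul_add, ← Finset.sum_mul, sum_neg_one_pow_val_dotProduct]
    simp only [funext_iff, Pi.zero_apply, add_eq_zero_iff_eq_neg, ZMod.neg_eq_self_mod_two,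
      ite_mul, zero_mul]
  rw [Finset.sum_comm, Finset.sum_congr rfl fun d _ => hinner d, Finset.sum_ite_eq']
  simp

end SignOfZModTwo

lemma zeta_two_pow_succ_pow_two_pow (m : ℕ) : zeta (2 ^ (m + 1)) ^ 2 ^ m = -1 := by
  rw [zeta, ← Complex.exp_nat_mul, ← Complex.exp_pi_mul_I]
  congr 1
  push_cast
  field_simp
  ring

lemma val_sum_range_two_pow_mul_val (k : ℕ) (b : ℕ → ZMod 2) :
    (∑ j ∈ Finset.range k, (2 ^ j : ZMod (2 ^ k)) * ((b j).val : ZMod (2 ^ k))).val =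
      ∑ j ∈ Finset.range k, 2 ^ j * (b j).val := by
  have hlt : ∑ j ∈ Finset.range k, 2 ^ j * (b j).val < 2 ^ k := calc
    _ ≤ ∑ j ∈ Finset.range k, 2 ^ j :=
        Finset.sum_le_sum fun j _ =>
          mul_le_of_le_one_right (Nat.zero_le _) (Nat.le_of_lt_succ (b j).val_lt)
    _ < 2 ^ k := Nat.geomSum_lt le_rfl fun j hj => Finset.mem_range.mp hj
  rw [← ZMod.val_natCast_of_lt hlt]
  push_cast
  rfl

lemma zeta_pow_val_sum_range_two_pow_mul_val (m : ℕ) (b : ℕ → ZMod 2) :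
    zeta (2 ^ (m + 1)) ^ (∑ j ∈ Finset.range (m + 1),
        (2 ^ j : ZMod (2 ^ (m + 1))) * ((b j).val : ZMod (2 ^ (m + 1)))).val =
      zeta (2 ^ (m + 1)) ^ (∑ j : Fin m, (b j).val * 2 ^ (j : ℕ)) * (-1) ^ (b m).val := by
  rw [val_sum_range_two_pow_mul_val, Finset.sum_range_succ, pow_add, pow_mul,
    zeta_two_pow_succ_pow_two_pow, Fin.sum_univ_eq_sum_range (fun j => (b j).val * 2 ^ j)]
  simp only [mul_comm]

lemma two_pow_mul_zeta_pow_val_sum_range_eq_sum_sum (m : ℕ) (b : ℕ → ZMod 2) :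
    2 ^ m * zeta (2 ^ (m + 1)) ^ (∑ j ∈ Finset.range (m + 1),
        (2 ^ j : ZMod (2 ^ (m + 1))) * ((b j).val : ZMod (2 ^ (m + 1)))).val =
      ∑ c : Fin m → ZMod 2, ∑ d : Fin m → ZMod 2,
        (-1 : ℂ) ^ (∑ j, (c j).val * (d j).val) *
          zeta (2 ^ (m + 1)) ^ (∑ j : Fin m, (d j).val * 2 ^ (j : ℕ)) *
          (-1) ^ ((∑ j : Fin m, c j * b j) + b m).val := by
  have hinv := sum_sum_neg_one_pow_dotProduct
    (fun d : Fin m → ZMod 2 => zeta (2 ^ (m + 1)) ^ (∑ j : Fin m, (d j).val * 2 ^ (j : ℕ)))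
    (fun j => b j)
  rw [Fintype.card_fin] at hinv
  simp_rw [zeta_pow_val_sum_range_two_pow_mul_val, neg_one_pow_val_add, ← mul_assoc, ← hinv,
    Finset.sum_mul]

theorem statement_11_general (n k : ℕ) (hk : 1 ≤ k)
    (fj : ℕ → GaloisField 2 n → ZMod 2)
    (f : GaloisField 2 n → ZMod (2 ^ k))
    (hf : ∀ x, f x = ∑ j ∈ Finset.range k,
      (2 ^ j : ZMod (2 ^ k)) * ((fj j x).val : ZMod (2 ^ k)))
    (i : ℕ) (a : GaloisField 2 n) :
    egwht n (2 ^ k) f i a =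
      ((2 : ℂ) ^ (k - 1))⁻¹ *
        ∑ c : Fin (k - 1) → ZMod 2, ∑ d : Fin (k - 1) → ZMod 2,
          (-1 : ℂ) ^ (∑ j : Fin (k - 1), (c j).val * (d j).val) *
            zeta (2 ^ k) ^ (∑ j : Fin (k - 1), (d j).val * 2 ^ (j : ℕ)) *
            bwhtExt n (fun x => (∑ j : Fin (k - 1), c j * fj j x) + fj (k - 1) x) i a := by
  obtain ⟨m, rfl⟩ : ∃ m, k = m + 1 := ⟨k - 1, by omega⟩
  rw [Nat.add_sub_cancel, eq_inv_mul_iff_mul_eq₀ (pow_ne_zero _ two_ne_zero)]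
  calc 2 ^ m * egwht n (2 ^ (m + 1)) f i a
      = ∑ x, 2 ^ m * zeta (2 ^ (m + 1)) ^ (f x).val *
          (-1) ^ (Algebra.trace (ZMod 2) (GaloisField 2 n) (a * x ^ i)).val := by
        simp only [egwht, Finset.mul_sum, mul_assoc]
    _ = _ := by
        simp_rw [hf, two_pow_mul_zeta_pow_val_sum_range_eq_sum_sum, Finset.sum_mul]
        rw [Finset.sum_comm]
        refine Finset.sum_congr rfl fun c _ => ?_
        rw [Finset.sum_comm]
        simp only [bwhtExt, Finset.mul_sum, neg_one_pow_val_add, mul_assoc]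

theorem statement_11 (n k : ℕ) (hn : 1 ≤ n) (hk : 1 ≤ k)
    (fj : ℕ → GaloisField 2 n → ZMod 2)
    (f : GaloisField 2 n → ZMod (2 ^ k))
    (hf : ∀ x, f x = ∑ j ∈ Finset.range k,
      (2 ^ j : ZMod (2 ^ k)) * ((fj j x).val : ZMod (2 ^ k)))
    (i : ℕ) (hi : Nat.Coprime i (2 ^ n - 1)) (a : GaloisField 2 n) :
    egwht n (2 ^ k) f i a =
      ((2 : ℂ) ^ (k - 1))⁻¹ *
        ∑ c : Fin (k - 1) → ZMod 2, ∑ d : Fin (k - 1) → ZMod 2,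
          (-1 : ℂ) ^ (∑ j : Fin (k - 1), (c j).val * (d j).val) *
            zeta (2 ^ k) ^ (∑ j : Fin (k - 1), (d j).val * 2 ^ (j : ℕ)) *
            bwhtExt n (fun x => (∑ j : Fin (k - 1), c j * fj j x) + fj (k - 1) x) i a :=
  statement_11_general n k hk fj f hf i a
end
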